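/- For every n ≥ 1 and every p : Fin n → ℝ², every point of the segment joining the first and last vertices is within the maximal vertex-to-segment distance of the polygonal curve: for all q ∈ segment ℝ (p 0) (p (n−1)), infDist q (C(p)) ≤ max_{i : Fin n} infDist (p i) (segment ℝ (p 0) (p (n−1))). -/

import Mathlib

/-!
Project every vertex `p i` to a nearest point `lineMap a b (T i)` of the chord `[a, b]` joining
the end vertices, with `T 0 = 0` and `T last = 1`. If `q = lineMap a b t`, a discrete intermediate
value argument puts `t` between `T j` and `T (j + 1)` for some `j`, so `q` is a convex combination
of the projections of `p j` and `p (j + 1)`. The same combination of `p j` and `p (j + 1)` lies on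
the curve, and by convexity of the norm its distance to `q` is at most the larger of the two
vertex-to-chord distances.
-/

open Metric

/-- The polygonal curve on vertices `p 0, …, p (n-1)`: the union of the segments
between consecutive vertices. -/
noncomputable def polyCurve {n : ℕ} (p : Fin n → EuclideanSpace ℝ (Fin 2)) :
    Set (EuclideanSpace ℝ (Fin 2)) :=
  ⋃ i : Fin (n - 1),
    segment ℝ (p ⟨i.1, by have := i.isLt; omega⟩) (p ⟨i.1 + 1, by have := i.isLt; omega⟩)

open Set AffineMap

theorem Fin.exists_mem_uIcc_castSucc_succ {α : Type*} [LinearOrder α] {N : ℕ}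
    (f : Fin (N + 2) → α) {t : α} (ht : t ∈ uIcc (f 0) (f (last _))) :
    ∃ j : Fin (N + 1), t ∈ uIcc (f j.castSucc) (f j.succ) := by
  induction N with
  | zero => exact ⟨0, by simpa using ht⟩
  | succ N ih =>
    rcases uIcc_subset_uIcc_union_uIcc (b := f (last (N + 1)).castSucc) ht with h | h
    · obtain ⟨j, hj⟩ := ih (f ∘ castSucc) h
      exact ⟨j.castSucc, by rwa [succ_castSucc]⟩
    · exact ⟨last _, by rwa [succ_last]⟩

section NormedSpace

variable {E : Type*} [SeminormedAddCommGroup E] [NormedSpace ℝ E]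

theorem segment_subset_iUnion_segment_lineMap (a b : E) {N : ℕ} {T : Fin (N + 2) → ℝ}
    (h0 : T 0 = 0) (hlast : T (Fin.last _) = 1) :
    segment ℝ a b ⊆ ⋃ j : Fin (N + 1),
      segment ℝ (lineMap a b (T j.castSucc)) (lineMap a b (T j.succ)) := by
  rw [segment_eq_image_lineMap]
  rintro _ ⟨t, ht, rfl⟩
  rw [← uIcc_of_le zero_le_one, ← h0, ← hlast] at ht
  obtain ⟨j, hj⟩ := Fin.exists_mem_uIcc_castSucc_succ T ht
  rw [← segment_eq_uIcc] at hj
  exact mem_iUnion.2 ⟨j, image_segment ℝ (lineMap a b) _ _ ▸ mem_image_of_mem _ hj⟩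

theorem exists_mem_Icc_infDist_segment_eq_dist_lineMap (x a b : E) :
    ∃ t ∈ Icc (0 : ℝ) 1, infDist x (segment ℝ a b) = dist x (lineMap a b t) := by
  have hcpt : IsCompact (segment ℝ a b) := by
    rw [segment_eq_image_lineMap]
    exact isCompact_Icc.image AffineMap.lineMap_continuous
  obtain ⟨_, hy, hxy⟩ := hcpt.exists_infDist_eq_dist ⟨a, left_mem_segment ℝ a b⟩ x
  rw [segment_eq_image_lineMap] at hy
  obtain ⟨t, ht, rfl⟩ := hy
  exact ⟨t, ht, hxy⟩

theorem infDist_segment_le_max_of_mem_segment {r r' p p' q : E} (hq : q ∈ segment ℝ r r') :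
    infDist q (segment ℝ p p') ≤ max (dist r p) (dist r' p') := by
  obtain ⟨a, b, ha, hb, hab, rfl⟩ := hq
  calc infDist (a • r + b • r') (segment ℝ p p')
      ≤ dist (a • r + b • r') (a • p + b • p') := infDist_le_dist_of_mem ⟨a, b, ha, hb, hab, rfl⟩
    _ = ‖a • (r - p) + b • (r' - p')‖ := by rw [dist_eq_norm]; congr 1; module
    _ ≤ max ‖r - p‖ ‖r' - p'‖ := convexOn_univ_norm.le_on_segment' trivial trivial ha hb hab
    _ = max (dist r p) (dist r' p') := by rw [dist_eq_norm, dist_eq_norm]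

theorem infDist_iUnion_segment_le_of_mem_segment {N : ℕ} (p : Fin (N + 1) → E) {M : ℝ}
    (hM : ∀ i, infDist (p i) (segment ℝ (p 0) (p (Fin.last N))) ≤ M) {q : E}
    (hq : q ∈ segment ℝ (p 0) (p (Fin.last N))) :
    infDist q (⋃ j : Fin N, segment ℝ (p j.castSucc) (p j.succ)) ≤ M := by
  have hM0 : 0 ≤ M := infDist_nonneg.trans (hM 0)
  rcases N with _ | N
  · simpa using hM0
  set a := p 0
  set b := p (Fin.last _)
  -- The end vertices get the parameters `0` and `1` by hand: when `a = b`, a nearest point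
  -- parameter of `p 0` can be anything in `[0, 1]`.
  have hT : ∀ i, ∃ t ∈ Icc (0 : ℝ) 1, dist (lineMap a b t) (p i) ≤ M ∧
      (i = 0 → t = 0) ∧ (i = Fin.last _ → t = 1) := by
    intro i
    rcases eq_or_ne i 0 with rfl | h0
    · exact ⟨0, by simp, by simpa [a] using hM0, fun _ => rfl, fun h => absurd h Fin.last_pos.ne⟩
    rcases eq_or_ne i (Fin.last _) with rfl | hlast
    · exact ⟨1, by simp, by simpa [b] using hM0, fun h => absurd h h0, fun _ => rfl⟩
    obtain ⟨t, ht, hdist⟩ := exists_mem_Icc_infDist_segment_eq_dist_lineMap (p i) a b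
    refine ⟨t, ht, ?_, fun h => absurd h h0, fun h => absurd h hlast⟩
    rw [dist_comm, ← hdist]
    exact hM i
  choose T _ hTdist hT0 hTlast using hT
  obtain ⟨j, hj⟩ := mem_iUnion.1 <|
    segment_subset_iUnion_segment_lineMap a b (hT0 0 rfl) (hTlast _ rfl) hq
  calc infDist q (⋃ j : Fin (N + 1), segment ℝ (p j.castSucc) (p j.succ))
      ≤ infDist q (segment ℝ (p j.castSucc) (p j.succ)) :=
        infDist_le_infDist_of_subset (subset_iUnion_of_subset j le_rfl) ⟨_, left_mem_segment ..⟩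
    _ ≤ max (dist _ (p j.castSucc)) (dist _ (p j.succ)) :=
        infDist_segment_le_max_of_mem_segment hj
    _ ≤ M := max_le (hTdist _) (hTdist _)

end NormedSpace

theorem infDist_segment_point_le_max_vertex_dist
    (n : ℕ) (hn : 1 ≤ n) (p : Fin n → EuclideanSpace ℝ (Fin 2))
    (q : EuclideanSpace ℝ (Fin 2))
    (hq : q ∈ segment ℝ (p ⟨0, by omega⟩) (p ⟨n - 1, by omega⟩)) :
    Metric.infDist q (polyCurve p) ≤
      Finset.univ.sup' (Finset.univ_nonempty_iff.mpr ⟨⟨0, by omega⟩⟩)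
        (fun i : Fin n =>
          Metric.infDist (p i) (segment ℝ (p ⟨0, by omega⟩) (p ⟨n - 1, by omega⟩))) := by
  obtain ⟨N, rfl⟩ : ∃ N, n = N + 1 := ⟨n - 1, by omega⟩
  exact infDist_iUnion_segment_le_of_mem_segment p
    (fun i => Finset.le_sup' (f := fun i => infDist (p i) (segment ℝ (p 0) (p (Fin.last N))))
      (Finset.mem_univ i)) hq
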